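/- Let ψ_0, ψ_1, ψ_2, ψ_3 ∈ ℂ[u] be polynomials and suppose there exist polynomials φ_{12}, φ_{13} ∈ ℂ[u] such that W(ψ_1, ψ_2) = W(φ_{12}, ψ_0) and W(ψ_1, ψ_3) = W(φ_{13}, ψ_0), where W(F,G)(u) = F(u + i/2)G(u − i/2) − F(u − i/2)G(u + i/2). Then ψ_1 · W(ψ_1, ψ_2, ψ_3) = ψ_0 · W(ψ_0, φ_{12}, φ_{13}), where W of three polynomials is the 3×3 discrete Wronskian det( f_b^[4−2a] ). In particular, if ψ_0 and ψ_1 have no common zeros, then ψ_0 divides W(ψ_1, ψ_2, ψ_3) in ℂ[u]. -/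

import Mathlib

open Polynomial

/-- The shift of a polynomial: `p^[m](u) = p(u + i m / 2)`. -/
noncomputable def shP (m : ℤ) (p : Polynomial ℂ) : Polynomial ℂ :=
  p.comp (Polynomial.X + Polynomial.C (Complex.I * (m : ℂ) / 2))

/-- The 2×2 discrete Wronskian of polynomials. -/
noncomputable def W2P (p q : Polynomial ℂ) : Polynomial ℂ :=
  shP 1 p * shP (-1) q - shP (-1) p * shP 1 q

/-- The 3×3 discrete Wronskian `det(f_b^[4-2a])`, rows `a = 1,2,3`. -/
noncomputable def W3P (f g h : Polynomial ℂ) : Polynomial ℂ :=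
  Matrix.det (Matrix.of fun a b : Fin 3 => shP (2 - 2 * ((a : ℕ) : ℤ)) (![f, g, h] b))

/-! The identity `f · W(f,g,h) = W(W(f,g), W(f,h))` is a discrete Desnanot–Jacobi identity. Under the
QQ-relations the right-hand side for `ψ₁, ψ₂, ψ₃` equals the one for `ψ₀, φ₁₂, φ₁₃`, since `W` is
antisymmetric; this gives the product formula, and coprimality turns it into divisibility. -/

lemma shP_mul (m : ℤ) (p q : ℂ[X]) : shP m (p * q) = shP m p * shP m q :=
  mul_comp p q _

lemma shP_sub (m : ℤ) (p q : ℂ[X]) : shP m (p - q) = shP m p - shP m q :=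
  sub_comp

lemma shP_zero (p : ℂ[X]) : shP 0 p = p := by
  simp [shP]

lemma shP_shP (m n : ℤ) (p : ℂ[X]) : shP m (shP n p) = shP (m + n) p := by
  simp only [shP, comp_assoc, add_comp, X_comp, C_comp, add_assoc, ← C_add]
  congr 3
  push_cast
  ring

lemma shP_W2P (m : ℤ) (f g : ℂ[X]) :
    shP m (W2P f g) = shP (m + 1) f * shP (m - 1) g - shP (m - 1) f * shP (m + 1) g := by
  simp only [W2P, shP_sub, shP_mul, shP_shP, ← sub_eq_add_neg]

lemma W2P_swap (f g : ℂ[X]) : W2P g f = -W2P f g := by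
  simp only [W2P]
  ring

lemma W2P_neg_neg (f g : ℂ[X]) : W2P (-f) (-g) = W2P f g := by
  simp only [W2P, shP, neg_comp]
  ring

lemma mul_W3P_eq_W2P_W2P (f g h : ℂ[X]) : f * W3P f g h = W2P (W2P f g) (W2P f h) := by
  rw [W2P, shP_W2P, shP_W2P, shP_W2P, shP_W2P, W3P, Matrix.det_fin_three]
  norm_num [shP_zero, Matrix.cons_val_two, Matrix.tail_cons, Matrix.head_cons]
  ring

/-- If `W(ψ_1,ψ_2) = W(φ_{12},ψ_0)` and `W(ψ_1,ψ_3) = W(φ_{13},ψ_0)`, then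
`ψ_1 · W(ψ_1,ψ_2,ψ_3) = ψ_0 · W(ψ_0,φ_{12},φ_{13})`; in particular if `ψ_0, ψ_1` have
no common zeros then `ψ_0` divides `W(ψ_1,ψ_2,ψ_3)`. -/
theorem stmt13 (ψ0 ψ1 ψ2 ψ3 φ12 φ13 : Polynomial ℂ)
    (h12 : W2P ψ1 ψ2 = W2P φ12 ψ0) (h13 : W2P ψ1 ψ3 = W2P φ13 ψ0) :
    ψ1 * W3P ψ1 ψ2 ψ3 = ψ0 * W3P ψ0 φ12 φ13
    ∧ (IsCoprime ψ0 ψ1 → ψ0 ∣ W3P ψ1 ψ2 ψ3) := by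
  have product : ψ1 * W3P ψ1 ψ2 ψ3 = ψ0 * W3P ψ0 φ12 φ13 := by
    rw [mul_W3P_eq_W2P_W2P, mul_W3P_eq_W2P_W2P, h12, h13, W2P_swap φ12, W2P_swap φ13,
      W2P_neg_neg]
  exact ⟨product, fun hcop => hcop.dvd_of_dvd_mul_left ⟨_, product⟩⟩
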